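/- For every n > 4, the word w = a^k b^k a^k b^k a^{n-4k} with k = ⌊n/4⌋ has at least (k+1)(k+2)/2 distinct closed factors; hence there exist binary words of length n with Θ(n²) distinct closed factors. -/

import Mathlib

variable {α : Type*}

/-- `u` is a factor (contiguous subword) of `w`. -/
def IsFactor (u w : List α) : Prop := ∃ v z : List α, w = v ++ u ++ z

/-- `u` is a border of `w`: a word different from `w` that is both a prefix and a suffix. -/
def IsBorder (u w : List α) : Prop := u ≠ w ∧ u <+: w ∧ u <:+ w

/-- `u` has an internal occurrence in `w`. -/
def HasInternalOcc (u w : List α) : Prop :=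
  ∃ v z : List α, v ≠ [] ∧ z ≠ [] ∧ w = v ++ u ++ z

/-- A word is closed if it is empty or has a border with no internal occurrence. -/
def ClosedWord (w : List α) : Prop :=
  w = [] ∨ ∃ u : List α, IsBorder u w ∧ ¬ HasInternalOcc u w

/-- The set of closed factors of `w`. -/
def closedFactors (w : List α) : Set (List α) := {u | IsFactor u w ∧ ClosedWord u}

/-- A word is CR-poor if it has exactly `|w| + 1` closed factors. -/
def IsCRPoor (w : List α) : Prop := (closedFactors w).ncard = w.length + 1

/-- `w` is a complete return to `u`: exactly two occurrences of `u` in `w`,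
one as a prefix and one as a suffix. -/
def IsCompleteReturn (u w : List α) : Prop :=
  u <+: w ∧ u <:+ w ∧ {i : ℕ | i + u.length ≤ w.length ∧ u <+: w.drop i}.ncard = 2

/-- The set of palindromic factors of `w`. -/
def palFactors (w : List α) : Set (List α) := {u | IsFactor u w ∧ u.reverse = u}

/-- `k`-fold concatenation power of a word. -/
def listPow (u : List α) : ℕ → List α
  | 0 => []
  | k + 1 => u ++ listPow u k

/-- A word is primitive if it is nonempty and not a power `u^k` with `k ≥ 2`. -/
def Primitive (v : List α) : Prop :=
  v ≠ [] ∧ ∀ (u : List α) (k : ℕ), 2 ≤ k → v ≠ listPow u k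

/-- `p` is a period of `w`. -/
def HasPeriod (w : List α) (p : ℕ) : Prop := 0 < p ∧ p ≤ w.length ∧ w.drop p <+: w

/-!
For `1 ≤ s, t ≤ k` the factor `a^s b^k a^k b^t` of `a^k b^k a^k b^k` is closed: it has the border
`a^s b^t`, and any occurrence of `a^s b^t` puts an `ab` at one of the only two `ab` positions, so it
is the prefix or the suffix. These `k²` words together with the `k + 1` powers `a^i`, `i ≤ k`, are
distinct closed factors, and `k² + k + 1 ≥ (k + 1)(k + 2) / 2`.
-/

open List

def fourBlocks (a b : α) (s m n t : ℕ) : List α :=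
  replicate s a ++ replicate m b ++ replicate n a ++ replicate t b

theorem isFactor_iff_isInfix {u w : List α} : IsFactor u w ↔ u <:+: w := by
  simp only [IsFactor, IsInfix, eq_comm]

theorem closedFactors_mono {u w : List α} (h : u <:+: w) :
    closedFactors u ⊆ closedFactors w := fun _ ⟨hx, hc⟩ =>
  ⟨isFactor_iff_isInfix.2 ((isFactor_iff_isInfix.1 hx).trans h), hc⟩

theorem closedFactors_finite (w : List α) : (closedFactors w).Finite :=
  w.sublists.finite_toSet.subset fun _ hu =>
    mem_sublists.2 (isFactor_iff_isInfix.1 hu.1).sublist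

theorem not_hasInternalOcc_of_length_le {u w : List α} (h : w.length ≤ u.length + 1) :
    ¬ HasInternalOcc u w := by
  rintro ⟨v, z, hv, hz, rfl⟩
  simp only [length_append] at h
  have := length_pos_iff.2 hv
  have := length_pos_iff.2 hz
  omega

theorem getElem_of_eq_append {w v u z : List α} (h : w = v ++ u ++ z) {i : ℕ}
    (hi : i < u.length) : w[v.length + i]'(by simp [h]; omega) = u[i] := by
  subst h
  simp [getElem_append_left, getElem_append_right, hi]

theorem closedWord_replicate (c : α) : ∀ n, ClosedWord (replicate n c)
  | 0 => Or.inl rfl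
  | n + 1 => Or.inr ⟨replicate n c, ⟨by simp, prefix_replicate_iff.2 (by simp),
      suffix_replicate_iff.2 (by simp)⟩,
      not_hasInternalOcc_of_length_le (by simp)⟩

section fourBlocks

variable {a b : α} {s m n t : ℕ}

theorem getElem_fourBlocks_eq_left_iff (hab : a ≠ b) {i : ℕ}
    (hi : i < (fourBlocks a b s m n t).length) :
    (fourBlocks a b s m n t)[i] = a ↔ i < s ∨ s + m ≤ i ∧ i < s + m + n := by
  simp only [fourBlocks, getElem_append, getElem_replicate, length_append, length_replicate]
  split_ifs <;> simp [hab.symm] <;> omega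

theorem closedWord_fourBlocks (hab : a ≠ b) (hs : 1 ≤ s) (hsn : s ≤ n) (ht : 1 ≤ t)
    (htm : t ≤ m) : ClosedWord (fourBlocks a b s m n t) := by
  refine Or.inr ⟨replicate s a ++ replicate t b, ⟨?_, ?_, ?_⟩, ?_⟩
  · intro h
    have := congrArg length h
    simp [fourBlocks] at this
    omega
  · simp only [fourBlocks, append_assoc, prefix_append_right_inj]
    exact prefix_append_of_prefix (prefix_replicate_iff.2 (by simp [htm]))
  · rw [fourBlocks, suffix_append_self_iff]
    exact suffix_append_of_suffix (suffix_replicate_iff.2 (by simp [hsn]))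
  · rintro ⟨v, z, hv, hz, h⟩
    have hlen : s + m + n + t = v.length + (s + t) + z.length := by
      simpa [fourBlocks, Nat.add_assoc] using congrArg length h
    have := length_pos_iff.2 hv
    have := length_pos_iff.2 hz
    have h_a : (fourBlocks a b s m n t)[v.length + (s - 1)]'(by simp [fourBlocks]; omega) = a :=
      (getElem_of_eq_append h (by simp; omega)).trans (by simp [getElem_append]; omega)
    have h_b : (fourBlocks a b s m n t)[v.length + s]'(by simp [fourBlocks]; omega) ≠ a := by
      rw [getElem_of_eq_append h (by simp; omega)]
      simpa [getElem_append] using hab.symm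
    rw [getElem_fourBlocks_eq_left_iff hab] at h_a
    rw [Ne, getElem_fourBlocks_eq_left_iff hab] at h_b
    omega

theorem fourBlocks_injective (hab : a ≠ b) (m n : ℕ) :
    Function.Injective fun p : ℕ × ℕ => fourBlocks a b p.1 m n p.2 := by
  classical
  rintro ⟨s, t⟩ ⟨s', t'⟩ h
  have hlen := congrArg length h
  have hcount := congrArg (count a) h
  simp [fourBlocks, count_replicate, hab.symm] at hlen hcount
  ext <;> omega

theorem fourBlocks_infix_fourBlocks {s' t' : ℕ} (hs : s ≤ s') (ht : t ≤ t') :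
    fourBlocks a b s m n t <:+: fourBlocks a b s' m n t' := by
  refine ⟨replicate (s' - s) a, replicate (t' - t) b, ?_⟩
  rw [fourBlocks, fourBlocks, ← Nat.sub_add_cancel hs, ← Nat.add_sub_cancel' ht]
  simp only [replicate_add, append_assoc, Nat.add_sub_cancel_left, Nat.add_sub_cancel]

end fourBlocks

theorem le_ncard_closedFactors_fourBlocks {a b : α} (hab : a ≠ b) (k : ℕ) :
    k + 1 + k * k ≤ (closedFactors (fourBlocks a b k k k k)).ncard := by
  classical
  let powers := (Finset.range (k + 1)).image (replicate · a)
  let returns := (Finset.Icc 1 k ×ˢ Finset.Icc 1 k).image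
    fun p : ℕ × ℕ => fourBlocks a b p.1 k k p.2
  have hdisj : Disjoint powers returns := by
    simp only [Finset.disjoint_left, powers, returns, Finset.mem_image]
    rintro _ ⟨i, -, rfl⟩ ⟨⟨s, t⟩, hst, h⟩
    have hb : b ∈ replicate i a := h ▸ by simp at hst; simp [fourBlocks]; omega
    exact hab (eq_of_mem_replicate hb).symm
  have hsub : ↑(powers ∪ returns) ⊆ closedFactors (fourBlocks a b k k k k) := by
    intro u hu
    simp only [Finset.coe_union, Set.mem_union, Finset.mem_coe, powers, returns,
      Finset.mem_image, Finset.mem_range, Finset.mem_product, Finset.mem_Icc] at hu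
    rcases hu with ⟨i, hi, rfl⟩ | ⟨⟨s, t⟩, ⟨⟨hs, hsk⟩, ht, htk⟩, rfl⟩
    · have hinfix : replicate i a <:+: replicate k a := infix_replicate_iff.2 (by simp; omega)
      exact ⟨isFactor_iff_isInfix.2 (hinfix.trans (by simp [fourBlocks, infix_append_left])),
        closedWord_replicate a i⟩
    · exact ⟨isFactor_iff_isInfix.2 (fourBlocks_infix_fourBlocks hsk htk),
        closedWord_fourBlocks hab hs hsk ht htk⟩
  calc k + 1 + k * k = (powers ∪ returns).card := by
        rw [Finset.card_union_of_disjoint hdisj,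
          Finset.card_image_of_injective _ (replicate_left_injective a),
          Finset.card_image_of_injective _ (fourBlocks_injective hab k k)]
        simp
    _ ≤ _ := by
        rw [← Set.ncard_coe_finset]
        exact Set.ncard_le_ncard hsub (closedFactors_finite _)

theorem stmt_19_general {α : Type*} (a b : α) (hab : a ≠ b) (n : ℕ) :
    (n / 4 + 1) * (n / 4 + 2) / 2 ≤
      (closedFactors (List.replicate (n / 4) a ++ List.replicate (n / 4) b ++
        List.replicate (n / 4) a ++ List.replicate (n / 4) b ++
        List.replicate (n - 4 * (n / 4)) a)).ncard := by
  set k := n / 4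
  calc (k + 1) * (k + 2) / 2 ≤ k + 1 + k * k := Nat.div_le_of_le_mul (by nlinarith)
    _ ≤ (closedFactors (fourBlocks a b k k k k)).ncard :=
        le_ncard_closedFactors_fourBlocks hab k
    _ ≤ _ := Set.ncard_le_ncard (closedFactors_mono infix_append_left) (closedFactors_finite _)

/-- For every n > 4, the word a^k b^k a^k b^k a^(n-4k) with k = ⌊n/4⌋ has at least
(k+1)(k+2)/2 distinct closed factors; hence words of length n can have
quadratically many closed factors. -/
theorem stmt_19 {α : Type*} (a b : α) (hab : a ≠ b) (n : ℕ) (hn : 4 < n) :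
    (n / 4 + 1) * (n / 4 + 2) / 2 ≤
      (closedFactors (List.replicate (n / 4) a ++ List.replicate (n / 4) b ++
        List.replicate (n / 4) a ++ List.replicate (n / 4) b ++
        List.replicate (n - 4 * (n / 4)) a)).ncard :=
  stmt_19_general a b hab n
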